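/- arXiv:1907.08165 — 3 statements merged into one kernel-verified Lean document; each statement's English description precedes it below -/
import Mathlib

section
/- Let N be a finite set of agents and A a finite set of m ≥ 1 alternatives, with values v : N → A → ℝ≥0. For each agent i, let top_λ(i) ⊆ A be a set of λ alternatives (1 ≤ λ ≤ m) such that every alternative in top_λ(i) has value at least v i j for every j ∉ top_λ(i) (i.e., top_λ(i) consists of the λ most-preferred alternatives of i). Define the revealed welfare SWr(j) = ∑_{i : j ∈ top_λ(i)} v i j and the true welfare SW(j) = ∑_{i ∈ N} v i j. If y maximizes SWr over A, then for every alternative x, SW(x) ≤ (1 + (m-1)/λ) · SWr(y), and hence SW(x) ≤ (1 + (m-1)/λ) · SW(y). -/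
/-- Distortion guarantee of λ-Prefix Range Voting (Theorem 3.1). -/
theorem prefix_range_voting_distortion
    (N A : Type*) [Fintype N] [Fintype A] [DecidableEq A] (m lambda : ℕ)
    (hm : 1 ≤ m) (hA : Fintype.card A = m)
    (hlam1 : 1 ≤ lambda) (hlam2 : lambda ≤ m)
    (v : N → A → ℝ) (hv : ∀ i j, 0 ≤ v i j)
    (top : N → Finset A) (hcard : ∀ i, (top i).card = lambda)
    (htop : ∀ i, ∀ a ∈ top i, ∀ j ∉ top i, v i j ≤ v i a)
    (SWr SW : A → ℝ)
    (hSWr : ∀ j, SWr j = ∑ i, if j ∈ top i then v i j else 0)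
    (hSW : ∀ j, SW j = ∑ i, v i j)
    (y : A) (hy : ∀ j, SWr j ≤ SWr y) :
    ∀ x, SW x ≤ (1 + ((m : ℝ) - 1) / (lambda : ℝ)) * SWr y ∧
      SW x ≤ (1 + ((m : ℝ) - 1) / (lambda : ℝ)) * SW y := by
  intro x
  have hlpos : (0:ℝ) < (lambda : ℝ) := by exact_mod_cast hlam1
  have hSWry_nonneg : 0 ≤ SWr y := by
    rw [hSWr]
    apply Finset.sum_nonneg
    intro i _
    split
    · exact hv i y
    · exact le_refl 0
  have key : ∀ i, (lambda:ℝ) * (if x ∈ top i then 0 else v i x) ≤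
      ∑ a ∈ Finset.univ.erase x, (if a ∈ top i then v i a else 0) := by
    intro i
    by_cases hx : x ∈ top i
    · simp only [hx, if_pos, mul_zero]
      apply Finset.sum_nonneg
      intro a _
      split
      · exact hv i a
      · exact le_refl 0
    · simp only [hx, if_neg, not_false_iff]
      have h1 : (lambda:ℝ) * v i x = ∑ _a ∈ top i, v i x := by
        rw [Finset.sum_const, hcard, nsmul_eq_mul]
      rw [h1]
      have hsub : top i ⊆ Finset.univ.erase x := by
        intro a ha
        exact Finset.mem_erase.mpr ⟨fun h => hx (h ▸ ha), Finset.mem_univ a⟩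
      calc ∑ _a ∈ top i, v i x ≤ ∑ a ∈ top i, v i a :=
            Finset.sum_le_sum (fun a ha => htop i a ha x hx)
        _ = ∑ a ∈ top i, (if a ∈ top i then v i a else 0) := by
            apply Finset.sum_congr rfl; intro a ha; simp [ha]
        _ ≤ ∑ a ∈ Finset.univ.erase x, (if a ∈ top i then v i a else 0) := by
            apply Finset.sum_le_sum_of_subset_of_nonneg hsub
            intro a _ _
            split
            · exact hv i a
            · exact le_refl 0
  have hT : (lambda:ℝ) * (∑ i, if x ∈ top i then 0 else v i x) ≤ ((m:ℝ)-1) * SWr y := by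
    rw [Finset.mul_sum]
    calc ∑ i, (lambda:ℝ) * (if x ∈ top i then 0 else v i x)
        ≤ ∑ i, ∑ a ∈ Finset.univ.erase x, (if a ∈ top i then v i a else 0) :=
          Finset.sum_le_sum (fun i _ => key i)
      _ = ∑ a ∈ Finset.univ.erase x, SWr a := by
          rw [Finset.sum_comm]
          exact Finset.sum_congr rfl (fun a _ => (hSWr a).symm)
      _ ≤ ∑ _a ∈ Finset.univ.erase x, SWr y := Finset.sum_le_sum (fun a _ => hy a)
      _ = ((m:ℝ)-1) * SWr y := by
          rw [Finset.sum_const, Finset.card_erase_of_mem (Finset.mem_univ x),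
            Finset.card_univ, hA, nsmul_eq_mul, Nat.cast_sub hm, Nat.cast_one]
  have hsplit : SW x = SWr x + (∑ i, if x ∈ top i then 0 else v i x) := by
    rw [hSW, hSWr, ← Finset.sum_add_distrib]
    apply Finset.sum_congr rfl
    intro i _
    by_cases hx : x ∈ top i <;> simp [hx]
  have hTdiv : (∑ i, if x ∈ top i then 0 else v i x) ≤ ((m:ℝ)-1) / (lambda:ℝ) * SWr y := by
    rw [div_mul_eq_mul_div, le_div_iff₀ hlpos, mul_comm _ (lambda:ℝ)]
    exact hT
  have h1 : SW x ≤ (1 + ((m : ℝ) - 1) / (lambda : ℝ)) * SWr y := by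
    rw [hsplit]
    have := hy x
    nlinarith [hTdiv, hy x]
  refine ⟨h1, ?_⟩
  have hyle : SWr y ≤ SW y := by
    rw [hSWr, hSW]
    apply Finset.sum_le_sum
    intro i _
    split
    · exact le_refl _
    · exact hv i y
  have hcoef : 0 ≤ 1 + ((m : ℝ) - 1) / (lambda : ℝ) := by
    have : (0:ℝ) ≤ ((m:ℝ)-1) := by
      have : (1:ℝ) ≤ (m:ℝ) := by exact_mod_cast hm
      linarith
    positivity
  calc SW x ≤ (1 + ((m : ℝ) - 1) / (lambda : ℝ)) * SWr y := h1
    _ ≤ (1 + ((m : ℝ) - 1) / (lambda : ℝ)) * SW y := by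
        apply mul_le_mul_of_nonneg_left hyle hcoef
end

section
/- Let N be a finite set of n agents, A a finite set of m alternatives, k ≥ 1, λ_ℓ = m^{ℓ/(k+1)}, and v : N → A → ℝ≥0 with v_i* := max_j v i j. Define ṽ as the simulated profile (ṽ i j = v_i*/λ_ℓ when v i j ∈ [v_i*/λ_ℓ, v_i*/λ_{ℓ-1}) for ℓ ∈ [k], ṽ i (argmax) = v_i*, and ṽ i j = 0 when v i j < v_i*/λ_k). Let z maximize ∑_i ṽ i j over j ∈ A, and let x maximize ∑_i v i j. Then ∑_i v i x ≤ (λ_1 + m/λ_k) · ∑_i v i z, i.e., the distortion of k-ARV is at most 2 · m^{1/(k+1)}. -/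
/-!
Write `r = m^{1/(k+1)}`, so that `λ_ℓ = r^ℓ`. If `ṽ i j = v_i*/r^ℓ` with `ℓ` the least admissible
level, then `v i j` lies below the previous threshold `v_i*/r^{ℓ-1} = r · ṽ i j`; otherwise
`v i j < v_i*/r^k`. Hence `v i j ≤ r · ṽ i j + v_i*/r^k` for every `i, j`. Summing over agents
at `x`, the first term is at most `r · S(z)` where `S(j) = ∑ᵢ ṽ i j`, and
`∑ᵢ v_i* = ∑ᵢ ṽ i (top i) ≤ ∑_j S(j) ≤ m · S(z)`. Finally `S(z) ≤ ∑ᵢ v i z`, since rounding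
only decreases values.
-/

open Finset

namespace ARV

lemma exists_least_mem_Icc {P : ℕ → Prop} {k : ℕ} (hk : 1 ≤ k) (hP : P k) :
    ∃ ℓ ∈ Icc 1 k, P ℓ ∧ ∀ ℓ' ∈ Icc 1 k, ℓ' < ℓ → ¬ P ℓ' := by
  classical
  have hex : ∃ ℓ, 1 ≤ ℓ ∧ P ℓ := ⟨k, hk, hP⟩
  refine ⟨Nat.find hex, mem_Icc.2 ⟨(Nat.find_spec hex).1, Nat.find_min' hex ⟨hk, hP⟩⟩,
    (Nat.find_spec hex).2, fun ℓ' hℓ' hlt hPℓ' => ?_⟩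
  exact Nat.find_min hex hlt ⟨(mem_Icc.1 hℓ').1, hPℓ'⟩

lemma mul_div_pow_succ {r : ℝ} (hr : r ≠ 0) (t : ℝ) (n : ℕ) :
    r * (t / r ^ (n + 1)) = t / r ^ n := by
  field_simp
  ring

/-- `b` is `a` rounded down to the grid `t / r ^ ℓ`, `1 ≤ ℓ ≤ k`, or to `0` below it. -/
lemma rounded_value_bounds {r t a b : ℝ} {k : ℕ} (hr : 0 < r) (hk : 1 ≤ k)
    (ha : 0 ≤ a) (hat : a ≤ t)
    (hlevel : ∀ ℓ ∈ Icc 1 k, t / r ^ ℓ ≤ a →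
      (∀ ℓ' ∈ Icc 1 k, ℓ' < ℓ → a < t / r ^ ℓ') → b = t / r ^ ℓ)
    (hbelow : a < t / r ^ k → b = 0) :
    0 ≤ b ∧ b ≤ a ∧ a ≤ r * b + t / r ^ k := by
  have ht : 0 ≤ t := ha.trans hat
  rcases lt_or_ge a (t / r ^ k) with hlow | hhigh
  · rw [hbelow hlow]
    exact ⟨le_rfl, ha, by simpa using hlow.le⟩
  obtain ⟨ℓ, hℓ, hle, hmin⟩ := exists_least_mem_Icc (P := fun ℓ => t / r ^ ℓ ≤ a) hk hhigh
  rw [hlevel ℓ hℓ hle fun ℓ' hℓ' hlt => not_le.1 (hmin ℓ' hℓ' hlt)]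
  obtain ⟨n, rfl⟩ : ∃ n, ℓ = n + 1 := Nat.exists_eq_add_of_le' (mem_Icc.1 hℓ).1
  -- `a` lies below the previous threshold, which is `t` itself when `ℓ = 1`
  have hprev : a ≤ t / r ^ n := by
    rcases Nat.eq_zero_or_pos n with rfl | hn
    · simpa using hat
    · exact not_lt.1 fun h => hmin n (mem_Icc.2 ⟨hn, by have := (mem_Icc.1 hℓ).2; omega⟩)
        (Nat.lt_succ_self n) h.le
  refine ⟨by positivity, hle, ?_⟩
  rw [mul_div_pow_succ hr.ne']
  linarith [show 0 ≤ t / r ^ k by positivity]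

variable {N A : Type*} [Fintype N] [Fintype A]

lemma sum_le_card_mul_sum_of_forall_sum_le {f : N → A → ℝ} (hf : ∀ i j, 0 ≤ f i j)
    (g : N → A) {z : A} (hz : ∀ j, ∑ i, f i j ≤ ∑ i, f i z) :
    ∑ i, f i (g i) ≤ Fintype.card A * ∑ i, f i z :=
  calc ∑ i, f i (g i) ≤ ∑ i, ∑ j, f i j :=
        sum_le_sum fun i _ => single_le_sum (fun j _ => hf i j) (mem_univ (g i))
    _ = ∑ j, ∑ i, f i j := sum_comm
    _ ≤ ∑ _j : A, ∑ i, f i z := sum_le_sum fun j _ => hz j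
    _ = Fintype.card A * ∑ i, f i z := by rw [sum_const, card_univ, nsmul_eq_mul]

theorem sum_le_mul_sum_of_simulated {v tv : N → A → ℝ} {top : N → A} {c d : ℝ}
    (hc : 0 ≤ c) (hd : 0 ≤ d) (htv_nonneg : ∀ i j, 0 ≤ tv i j) (htv_le : ∀ i j, tv i j ≤ v i j)
    (hv_le : ∀ i j, v i j ≤ c * tv i j + v i (top i) / d)
    (htv_top : ∀ i, tv i (top i) = v i (top i))
    {z : A} (hz : ∀ j, ∑ i, tv i j ≤ ∑ i, tv i z) (x : A) :
    ∑ i, v i x ≤ (c + Fintype.card A / d) * ∑ i, v i z := by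
  have htop_sum : ∑ i, v i (top i) ≤ Fintype.card A * ∑ i, tv i z := by
    simpa only [htv_top] using sum_le_card_mul_sum_of_forall_sum_le htv_nonneg top hz
  calc ∑ i, v i x ≤ ∑ i, (c * tv i x + v i (top i) / d) := sum_le_sum fun i _ => hv_le i x
    _ = c * ∑ i, tv i x + (∑ i, v i (top i)) / d := by
        rw [sum_add_distrib, mul_sum, sum_div]
    _ ≤ c * ∑ i, tv i z + (Fintype.card A * ∑ i, tv i z) / d := by
        gcongr c * ?_ + ?_ / d
        exact hz x
    _ = (c + Fintype.card A / d) * ∑ i, tv i z := by ring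
    _ ≤ (c + Fintype.card A / d) * ∑ i, v i z := by
        gcongr
        exact htv_le i z

end ARV

open ARV in
theorem arv_distortion_upper_general
    (N A : Type*) [Fintype N] [Fintype A] (m k : ℕ)
    (hm : 1 ≤ m) (hA : Fintype.card A = m) (hk : 1 ≤ k)
    (lam : ℕ → ℝ) (hlam : ∀ ℓ : ℕ, lam ℓ = (m : ℝ) ^ ((ℓ : ℝ) / ((k : ℝ) + 1)))
    (v tv : N → A → ℝ) (hv : ∀ i j, 0 ≤ v i j)
    (top : N → A) (htop : ∀ i j, v i j ≤ v i (top i))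
    (htv1 : ∀ i, tv i (top i) = v i (top i))
    (htv2 : ∀ i j ℓ, j ≠ top i → ℓ ∈ Finset.Icc 1 k →
      v i (top i) / lam ℓ ≤ v i j →
      (∀ ℓ' ∈ Finset.Icc 1 k, ℓ' < ℓ → v i j < v i (top i) / lam ℓ') →
      tv i j = v i (top i) / lam ℓ)
    (htv3 : ∀ i j, v i j < v i (top i) / lam k → tv i j = 0)
    (z : A) (hz : ∀ j, (∑ i, tv i j) ≤ ∑ i, tv i z)
    (x : A) :
    (∑ i, v i x) ≤ (lam 1 + (m : ℝ) / lam k) * ∑ i, v i z := by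
  set r : ℝ := (m : ℝ) ^ (1 / ((k : ℝ) + 1))
  have hr : 1 ≤ r := Real.one_le_rpow (by exact_mod_cast hm) (by positivity)
  have hlam_pow : lam = fun ℓ => r ^ ℓ := funext fun ℓ => by
    rw [hlam, ← Real.rpow_natCast, ← Real.rpow_mul (Nat.cast_nonneg m), one_div_mul_eq_div]
  subst hlam_pow
  have hbounds : ∀ i j, 0 ≤ tv i j ∧ tv i j ≤ v i j ∧ v i j ≤ r * tv i j + v i (top i) / r ^ k := by
    intro i j
    by_cases hj : j = top i
    · subst hj
      have htop_nonneg := hv i (top i)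
      rw [htv1]
      exact ⟨htop_nonneg, le_rfl, le_add_of_le_of_nonneg (le_mul_of_one_le_left htop_nonneg hr)
        (by positivity)⟩
    · exact rounded_value_bounds (by positivity) hk (hv i j) (htop i j)
        (fun ℓ hℓ => htv2 i j ℓ hj hℓ) (htv3 i j)
  simpa only [pow_one, hA] using sum_le_mul_sum_of_simulated (by positivity) (by positivity)
    (fun i j => (hbounds i j).1) (fun i j => (hbounds i j).2.1) (fun i j => (hbounds i j).2.2)
    htv1 hz x

/-- Theorem 4.1: the distortion of the k-ARV mechanism is at most
λ₁ + m/λ_k = 2 m^{1/(k+1)}. -/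
theorem arv_distortion_upper
    (N A : Type*) [Fintype N] [Fintype A] (m k : ℕ)
    (hm : 1 ≤ m) (hA : Fintype.card A = m) (hk : 1 ≤ k)
    (lam : ℕ → ℝ) (hlam : ∀ ℓ : ℕ, lam ℓ = (m : ℝ) ^ ((ℓ : ℝ) / ((k : ℝ) + 1)))
    (v tv : N → A → ℝ) (hv : ∀ i j, 0 ≤ v i j)
    (top : N → A) (htop : ∀ i j, v i j ≤ v i (top i))
    (htv1 : ∀ i, tv i (top i) = v i (top i))
    (htv2 : ∀ i j ℓ, j ≠ top i → ℓ ∈ Finset.Icc 1 k →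
      v i (top i) / lam ℓ ≤ v i j →
      (∀ ℓ' ∈ Finset.Icc 1 k, ℓ' < ℓ → v i j < v i (top i) / lam ℓ') →
      tv i j = v i (top i) / lam ℓ)
    (htv3 : ∀ i j, v i j < v i (top i) / lam k → tv i j = 0)
    (z : A) (hz : ∀ j, (∑ i, tv i j) ≤ ∑ i, tv i z)
    (x : A) (hx : ∀ j, (∑ i, v i j) ≤ ∑ i, v i x) :
    (∑ i, v i x) ≤ (lam 1 + (m : ℝ) / lam k) * ∑ i, v i z :=
  arv_distortion_upper_general N A m k hm hA hk lam hlam v tv hv top htop htv1 htv2 htv3 z hz x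
end

section
/- Let N, A, v, ṽ, λ_ℓ be as in the k-ARV setting, z the maximizer of simulated welfare ∑_i ṽ i j, and x the maximizer of true welfare. Let N_x = {i : v i x ≥ v_i*/λ_k}. Then ∑_{i ∉ N_x} v i x ≤ ((m-1)/λ_k) · ∑_i v i z. -/
/-- Inequality (4) in the proof of Theorem 4.1: the contribution to the welfare
of the optimal alternative x from agents whose value for x is below v_i*/λ_k
is at most (m-1)/λ_k times the welfare of the simulated-welfare maximizer z. -/
theorem arv_concealed_welfare_bound
    (N A : Type*) [Fintype N] [Fintype A] (m k : ℕ)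
    (hm : 1 ≤ m) (hA : Fintype.card A = m) (hk : 1 ≤ k)
    (lam : ℕ → ℝ) (hlam : ∀ ℓ : ℕ, lam ℓ = (m : ℝ) ^ ((ℓ : ℝ) / ((k : ℝ) + 1)))
    (v tv : N → A → ℝ) (hv : ∀ i j, 0 ≤ v i j)
    (top : N → A) (htop : ∀ i j, v i j ≤ v i (top i))
    (htv1 : ∀ i, tv i (top i) = v i (top i))
    (htv2 : ∀ i j ℓ, j ≠ top i → ℓ ∈ Finset.Icc 1 k →
      v i (top i) / lam ℓ ≤ v i j →
      (∀ ℓ' ∈ Finset.Icc 1 k, ℓ' < ℓ → v i j < v i (top i) / lam ℓ') →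
      tv i j = v i (top i) / lam ℓ)
    (htv3 : ∀ i j, v i j < v i (top i) / lam k → tv i j = 0)
    (z : A) (hz : ∀ j, (∑ i, tv i j) ≤ ∑ i, tv i z)
    (x : A) (hx : ∀ j, (∑ i, v i j) ≤ ∑ i, v i x) :
    (∑ i ∈ Finset.univ.filter (fun i => ¬ (v i (top i) / lam k ≤ v i x)), v i x) ≤
      (((m : ℝ) - 1) / lam k) * ∑ i, v i z := by
  classical
  have hm1 : (1 : ℝ) ≤ (m : ℝ) := by exact_mod_cast hm
  have hlampos : ∀ ℓ : ℕ, 0 < lam ℓ := by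
    intro ℓ
    rw [hlam]
    exact Real.rpow_pos_of_pos (by linarith) _
  have hlam1 : ∀ ℓ : ℕ, 1 ≤ lam ℓ := by
    intro ℓ
    rw [hlam]
    apply Real.one_le_rpow hm1
    positivity
  -- simulated values are nonnegative and below true values
  have htv_nn : ∀ i j, 0 ≤ tv i j ∧ tv i j ≤ v i j := by
    intro i j
    by_cases hj : j = top i
    · subst hj; rw [htv1]; exact ⟨hv i _, le_refl _⟩
    · by_cases hlow : v i j < v i (top i) / lam k
      · rw [htv3 i j hlow]; exact ⟨le_refl _, hv i j⟩
      · push_neg at hlow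
        set S : Finset ℕ := (Finset.Icc 1 k).filter
          (fun ℓ => v i (top i) / lam ℓ ≤ v i j) with hS
        have hkS : k ∈ S := by
          simp only [hS, Finset.mem_filter, Finset.mem_Icc]
          exact ⟨⟨hk, le_refl k⟩, hlow⟩
        have hSne : S.Nonempty := ⟨k, hkS⟩
        set ℓ := S.min' hSne with hℓ
        have hℓS : ℓ ∈ S := S.min'_mem hSne
        simp only [hS, Finset.mem_filter] at hℓS
        have h2 := htv2 i j ℓ hj hℓS.1 hℓS.2 (by
          intro ℓ' hℓ' hlt
          by_contra hcon
          push_neg at hcon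
          have : ℓ' ∈ S := by simp only [hS, Finset.mem_filter]; exact ⟨hℓ', hcon⟩
          exact absurd (S.min'_le ℓ' this) (not_le.mpr hlt))
        rw [h2]
        constructor
        · exact div_nonneg (hv i _) (hlampos ℓ).le
        · exact hℓS.2
  have htvz : (∑ i, tv i z) ≤ ∑ i, v i z :=
    Finset.sum_le_sum (fun i _ => (htv_nn i z).2)
  set L := lam k with hLdef
  have hL0 : 0 < L := hlampos k
  have hL1 : 1 ≤ L := hlam1 k
  set F := Finset.univ.filter (fun i : N => ¬ (v i (top i) / L ≤ v i x)) with hF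
  -- agents in F do not have x as favorite
  have hFx : ∀ i ∈ F, top i ≠ x := by
    intro i hi hcon
    simp only [hF, Finset.mem_filter] at hi
    apply hi.2
    rw [← hcon]
    calc v i (top i) / L ≤ v i (top i) / 1 := by
          apply div_le_div_of_nonneg_left (hv i _) one_pos hL1
      _ = v i (top i) := div_one _
  -- step 1: bound by favorite values over L
  have step1 : (∑ i ∈ F, v i x) ≤ (∑ i ∈ F, tv i (top i)) / L := by
    rw [Finset.sum_div]
    apply Finset.sum_le_sum
    intro i hi
    simp only [hF, Finset.mem_filter] at hi
    rw [htv1, div_eq_mul_inv]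
    have := le_of_lt (not_le.mp hi.2)
    rw [div_eq_mul_inv] at this
    linarith
  -- step 2: fiberwise decomposition over alternatives ≠ x
  have step2 : (∑ i ∈ F, tv i (top i)) ≤
      ∑ j ∈ Finset.univ.erase x, ∑ i, tv i j := by
    have hmaps : ∀ i ∈ F, top i ∈ Finset.univ.erase x := by
      intro i hi
      exact Finset.mem_erase.mpr ⟨hFx i hi, Finset.mem_univ _⟩
    rw [← Finset.sum_fiberwise_of_maps_to hmaps (fun i => tv i (top i))]
    apply Finset.sum_le_sum
    intro j _
    have : (∑ i ∈ F.filter (fun i => top i = j), tv i (top i))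
        = ∑ i ∈ F.filter (fun i => top i = j), tv i j := by
      apply Finset.sum_congr rfl
      intro i hi
      rw [(Finset.mem_filter.mp hi).2]
    rw [this]
    apply Finset.sum_le_sum_of_subset_of_nonneg (Finset.filter_subset _ _ |>.trans
      (Finset.filter_subset _ _))
    intro i _ _
    exact (htv_nn i j).1
  -- step 3: each column sum is at most the simulated welfare of z
  have step3 : (∑ j ∈ Finset.univ.erase x, ∑ i, tv i j) ≤
      ((m : ℝ) - 1) * ∑ i, v i z := by
    calc (∑ j ∈ Finset.univ.erase x, ∑ i, tv i j)
        ≤ ∑ _j ∈ Finset.univ.erase x, ∑ i, tv i z :=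
          Finset.sum_le_sum (fun j _ => hz j)
      _ = ((Finset.univ.erase x).card : ℝ) * ∑ i, tv i z := by
          rw [Finset.sum_const, nsmul_eq_mul]
      _ = ((m : ℝ) - 1) * ∑ i, tv i z := by
          rw [Finset.card_erase_of_mem (Finset.mem_univ x), Finset.card_univ, hA]
          have : ((m - 1 : ℕ) : ℝ) = (m : ℝ) - 1 := by
            rw [Nat.cast_sub hm, Nat.cast_one]
          rw [this]
      _ ≤ ((m : ℝ) - 1) * ∑ i, v i z := by
          apply mul_le_mul_of_nonneg_left htvz (by linarith)
  calc (∑ i ∈ F, v i x) ≤ (∑ i ∈ F, tv i (top i)) / L := step1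
    _ ≤ (((m : ℝ) - 1) * ∑ i, v i z) / L := by
        gcongr
        exact step2.trans step3
    _ = (((m : ℝ) - 1) / L) * ∑ i, v i z := by ring
end
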